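/- arXiv:2405.18982 — 2 statements merged into one kernel-verified Lean document; each statement's English description precedes it below -/
import Mathlib

section
/- If Sᵢᵀ Mᵢ Sᵢ = I and Sᵢᵀ Lᵢ Sᵢ = Λᵢ with all diagonal entries of Λ₁ ⊗ I + I ⊗ Λ₀ nonzero, then A = L₁ ⊗ M₀ + M₁ ⊗ L₀ is invertible with A⁻¹ = (S₁ ⊗ S₀)(Λ₁ ⊗ I + I ⊗ Λ₀)⁻¹(S₁ ⊗ S₀)ᵀ. -/
open Kronecker

namespace Matrix

theorem transpose_kronecker_mul_add_mul_kronecker {R l m : Type*} [CommSemiring R]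
    [Fintype l] [Fintype m] (L₁ M₁ S₁ : Matrix l l R) (L₀ M₀ S₀ : Matrix m m R) :
    (S₁ ⊗ₖ S₀)ᵀ * (L₁ ⊗ₖ M₀ + M₁ ⊗ₖ L₀) * (S₁ ⊗ₖ S₀) =
      (S₁ᵀ * L₁ * S₁) ⊗ₖ (S₀ᵀ * M₀ * S₀) + (S₁ᵀ * M₁ * S₁) ⊗ₖ (S₀ᵀ * L₀ * S₀) := by
  simp only [← kroneckerMap_transpose, Matrix.mul_add, Matrix.add_mul, mul_kronecker_mul]

theorem IsDiag.kronecker_one_add_one_kronecker {R l m : Type*} [NonAssocSemiring R]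
    [DecidableEq l] [DecidableEq m] {Λ₁ : Matrix l l R} {Λ₀ : Matrix m m R}
    (h₁ : Λ₁.IsDiag) (h₀ : Λ₀.IsDiag) :
    Λ₁ ⊗ₖ (1 : Matrix m m R) + (1 : Matrix l l R) ⊗ₖ Λ₀ =
      diagonal fun p => Λ₁ p.1 p.1 + Λ₀ p.2 p.2 := by
  rw [← ((h₁.kronecker isDiag_one).add (isDiag_one.kronecker h₀)).diagonal_diag]
  congr 1
  ext ⟨j, k⟩
  simp

theorem mul_eq_one_of_transpose_mul_mul_eq {R n : Type*} [CommRing R] [Fintype n] [DecidableEq n]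
    {A T D : Matrix n n R} (hD : IsUnit D.det) (h : Tᵀ * A * T = D) :
    A * (T * D⁻¹ * Tᵀ) = 1 := by
  have hleft : Tᵀ * (A * T * D⁻¹) = 1 := by
    rw [← Matrix.mul_assoc, ← Matrix.mul_assoc, h, mul_nonsing_inv _ hD]
  rw [mul_eq_one_comm] at hleft
  simpa only [Matrix.mul_assoc] using hleft

end Matrix

open Matrix in
/-- Fast diagonalization gives the inverse of the Kronecker sum. -/
theorem fast_diag_inverse_2d {n₀ n₁ : ℕ}
    (L₀ M₀ S₀ Λ₀ : Matrix (Fin n₀) (Fin n₀) ℝ)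
    (L₁ M₁ S₁ Λ₁ : Matrix (Fin n₁) (Fin n₁) ℝ)
    (hΛ₀ : Λ₀.IsDiag) (hΛ₁ : Λ₁.IsDiag)
    (hM₀ : S₀.transpose * M₀ * S₀ = 1) (hM₁ : S₁.transpose * M₁ * S₁ = 1)
    (hL₀ : S₀.transpose * L₀ * S₀ = Λ₀) (hL₁ : S₁.transpose * L₁ * S₁ = Λ₁)
    (hnz : ∀ (j : Fin n₁) (k : Fin n₀), Λ₁ j j + Λ₀ k k ≠ 0) :
    let A := L₁ ⊗ₖ M₀ + M₁ ⊗ₖ L₀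
    let D := Λ₁ ⊗ₖ (1 : Matrix (Fin n₀) (Fin n₀) ℝ) + (1 : Matrix (Fin n₁) (Fin n₁) ℝ) ⊗ₖ Λ₀
    let B := (S₁ ⊗ₖ S₀) * D⁻¹ * (S₁ ⊗ₖ S₀).transpose
    A * B = 1 ∧ B * A = 1 := by
  intro A D B
  have hcongr : (S₁ ⊗ₖ S₀)ᵀ * A * (S₁ ⊗ₖ S₀) = D := by
    rw [transpose_kronecker_mul_add_mul_kronecker, hL₀, hL₁, hM₀, hM₁]
  have hD : IsUnit D.det := by
    have hdiag : D = diagonal fun p => Λ₁ p.1 p.1 + Λ₀ p.2 p.2 :=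
      hΛ₁.kronecker_one_add_one_kronecker hΛ₀
    rw [hdiag, det_diagonal]
    exact isUnit_iff_ne_zero.mpr (Finset.prod_ne_zero_iff.mpr fun p _ => hnz p.1 p.2)
  have hAB : A * B = 1 := mul_eq_one_of_transpose_mul_mul_eq hD hcongr
  exact ⟨hAB, mul_eq_one_comm.mp hAB⟩
end

section
/- Fast diagonalization in 3D: under the same orthonormality hypotheses in each of three directions, the matrix A = L₂ ⊗ M₁ ⊗ M₀ + M₂ ⊗ L₁ ⊗ M₀ + M₂ ⊗ M₁ ⊗ L₀ satisfies (S₂ ⊗ S₁ ⊗ S₀)ᵀ A (S₂ ⊗ S₁ ⊗ S₀) = Λ₂ ⊗ I ⊗ I + I ⊗ Λ₁ ⊗ I + I ⊗ I ⊗ Λ₀. -/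
open Kronecker

/-- Fast diagonalization in 3D. -/
theorem fast_diag_3d {n₀ n₁ n₂ : ℕ}
    (L₀ M₀ S₀ Λ₀ : Matrix (Fin n₀) (Fin n₀) ℝ)
    (L₁ M₁ S₁ Λ₁ : Matrix (Fin n₁) (Fin n₁) ℝ)
    (L₂ M₂ S₂ Λ₂ : Matrix (Fin n₂) (Fin n₂) ℝ)
    (hΛ₀ : Λ₀.IsDiag) (hΛ₁ : Λ₁.IsDiag) (hΛ₂ : Λ₂.IsDiag)
    (hM₀ : S₀.transpose * M₀ * S₀ = 1) (hM₁ : S₁.transpose * M₁ * S₁ = 1)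
    (hM₂ : S₂.transpose * M₂ * S₂ = 1)
    (hL₀ : S₀.transpose * L₀ * S₀ = Λ₀) (hL₁ : S₁.transpose * L₁ * S₁ = Λ₁)
    (hL₂ : S₂.transpose * L₂ * S₂ = Λ₂) :
    ((S₂ ⊗ₖ S₁) ⊗ₖ S₀).transpose *
      ((L₂ ⊗ₖ M₁) ⊗ₖ M₀ + (M₂ ⊗ₖ L₁) ⊗ₖ M₀ + (M₂ ⊗ₖ M₁) ⊗ₖ L₀) *
      ((S₂ ⊗ₖ S₁) ⊗ₖ S₀)
    = (Λ₂ ⊗ₖ (1 : Matrix (Fin n₁) (Fin n₁) ℝ)) ⊗ₖ (1 : Matrix (Fin n₀) (Fin n₀) ℝ)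
      + ((1 : Matrix (Fin n₂) (Fin n₂) ℝ) ⊗ₖ Λ₁) ⊗ₖ (1 : Matrix (Fin n₀) (Fin n₀) ℝ)
      + ((1 : Matrix (Fin n₂) (Fin n₂) ℝ) ⊗ₖ (1 : Matrix (Fin n₁) (Fin n₁) ℝ)) ⊗ₖ Λ₀ := by
  simp only [← Matrix.kroneckerMap_transpose, Matrix.add_mul, Matrix.mul_add,
    ← Matrix.mul_kronecker_mul, hM₀, hM₁, hM₂, hL₀, hL₁, hL₂]
end
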